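/- Let K be a real n×n positive definite matrix with positive definite square root K^{1/2}, let P be a real n×m matrix, and set C = KP and W_e = PᵀKP; assume W_e is positive definite. Let K^{1/2}P = F S Nᵀ be a singular value decomposition with F an n×m matrix having orthonormal columns, N an m×m orthogonal matrix, and S an m×m diagonal matrix with positive diagonal entries (so W_e = N S² Nᵀ). Let W be any real m×m positive definite matrix with spectral decomposition W = Ñ S̃² Ñᵀ (Ñ orthogonal, S̃ diagonal positive), and define Ẽ = S Nᵀ Ñ S̃⁻² Ñᵀ N S − I_m. Then C W⁻¹ Cᵀ − C W_e⁻¹ Cᵀ = K^{1/2} F Ẽ Fᵀ K^{1/2}, and consequently ‖C W⁻¹ Cᵀ − C W_e⁻¹ Cᵀ‖₂ ≤ ‖K‖₂ · ‖Ẽ‖₂. -/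

import Mathlib

/-!
Put `Q = K^{1/2}` and `L = Q P = F S Nᵀ`, so that `C = Q L` and `W_e = Lᵀ L`. Since `F` has
orthonormal columns and `S`, `N` are invertible, `L W_e⁻¹ Lᵀ = F Fᵀ`, while
`L W⁻¹ Lᵀ = F (S Nᵀ W⁻¹ N S) Fᵀ`; subtracting and multiplying by `Q` on both sides gives the
identity. The difference is then `(Q F) Ẽ (Q F)ᵀ`, and `‖Q F‖² ≤ ‖Q‖² = ‖Qᵀ Q‖ = ‖K‖`.
-/

open Matrix

namespace Matrix.PosSemidef

open scoped ComplexOrder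

/-- The positive semidefinite square root of a positive semidefinite matrix
(the definition Mathlib had in December 2024, since removed). -/
noncomputable def sqrt {n : Type*} [Fintype n] [DecidableEq n] {𝕜 : Type*} [RCLike 𝕜]
    {A : Matrix n n 𝕜} (hA : A.PosSemidef) : Matrix n n 𝕜 :=
  hA.1.eigenvectorUnitary.1 * diagonal ((↑) ∘ (√·) ∘ hA.1.eigenvalues) *
  (star hA.1.eigenvectorUnitary : Matrix n n 𝕜)

end Matrix.PosSemidef

/-- Spectral norm (largest singular value / ℓ²→ℓ² operator norm) of a real matrix. -/
noncomputable def specNorm {α β : Type*} [Fintype α] [Fintype β] [DecidableEq α] [DecidableEq β]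
    (A : Matrix α β ℝ) : ℝ :=
  ‖(Matrix.toEuclideanLin A).toContinuousLinearMap‖

namespace Matrix.PosSemidef

open scoped ComplexOrder

variable {n : Type*} [Fintype n] [DecidableEq n] {𝕜 : Type*} [RCLike 𝕜]
  {A : Matrix n n 𝕜} (hA : A.PosSemidef)

theorem sqrt_mul_self : hA.sqrt * hA.sqrt = A := by
  conv_rhs => rw [hA.1.spectral_theorem, Unitary.conjStarAlgAut_apply]
  have hU : (star hA.1.eigenvectorUnitary : Matrix n n 𝕜) * hA.1.eigenvectorUnitary.1 = 1 :=
    Unitary.coe_star_mul_self _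
  simp only [sqrt, Matrix.mul_assoc]
  rw [← Matrix.mul_assoc _ hA.1.eigenvectorUnitary.1, hU, Matrix.one_mul,
    ← Matrix.mul_assoc (diagonal _) (diagonal _), diagonal_mul_diagonal]
  congr 3
  funext i
  simp only [Function.comp_apply]
  rw [← RCLike.ofReal_mul, Real.mul_self_sqrt (hA.eigenvalues_nonneg i)]

theorem isHermitian_sqrt : hA.sqrt.IsHermitian :=
  isHermitian_mul_mul_conjTranspose _ <| isHermitian_diagonal_iff.mpr fun i => by
    simp [isSelfAdjoint_iff]

end Matrix.PosSemidef

namespace Matrix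

section Orthogonal

variable {m n : Type*} [Fintype m] [DecidableEq m] [Fintype n] {R : Type*} [CommRing R]

theorem inv_mul_mul_transpose_of_orthogonal {U : Matrix m m R} (hU : Uᵀ * U = 1)
    (D : Matrix m m R) : (U * D * Uᵀ)⁻¹ = U * D⁻¹ * Uᵀ := by
  have hUinv : U⁻¹ = Uᵀ := inv_eq_left_inv hU
  rw [mul_inv_rev, mul_inv_rev, ← transpose_nonsing_inv, hUinv, transpose_transpose,
    Matrix.mul_assoc]

theorem inv_diagonal_of_ne_zero {K : Type*} [Field K] {v : m → K} (hv : ∀ i, v i ≠ 0) :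
    (diagonal v)⁻¹ = diagonal v⁻¹ :=
  inv_eq_left_inv <| by
    rw [diagonal_mul_diagonal, ← diagonal_one]
    exact congrArg diagonal <| funext fun i => inv_mul_cancel₀ (hv i)

theorem mul_inv_transpose_mul_self_mul_transpose_of_orthogonal
    {F : Matrix n m R} {S N : Matrix m m R} (hF : Fᵀ * F = 1) (hN : Nᵀ * N = 1)
    (hS : IsUnit S.det) :
    (F * S * Nᵀ) * ((F * S * Nᵀ)ᵀ * (F * S * Nᵀ))⁻¹ * (F * S * Nᵀ)ᵀ = F * Fᵀ := by
  have hSt : IsUnit Sᵀ.det := by rwa [det_transpose]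
  have hgram : (F * S * Nᵀ)ᵀ * (F * S * Nᵀ) = N * (Sᵀ * S) * Nᵀ := by
    simp only [transpose_mul, transpose_transpose, Matrix.mul_assoc]
    rw [← Matrix.mul_assoc Fᵀ F, hF, Matrix.one_mul]
  rw [hgram, inv_mul_mul_transpose_of_orthogonal hN, mul_inv_rev]
  simp only [transpose_mul, transpose_transpose, Matrix.mul_assoc]
  rw [← Matrix.mul_assoc Nᵀ N, hN, Matrix.one_mul, ← Matrix.mul_assoc S, mul_nonsing_inv S hS,
    Matrix.one_mul, ← Matrix.mul_assoc Nᵀ N, hN, Matrix.one_mul, ← Matrix.mul_assoc Sᵀ⁻¹,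
    nonsing_inv_mul _ hSt, Matrix.one_mul]

end Orthogonal

section L2OpNorm

open scoped Matrix.Norms.L2Operator

variable {m n : Type*} [Fintype m] [Fintype n] [DecidableEq n]

theorem l2_opNorm_transpose [DecidableEq m] (A : Matrix m n ℝ) : ‖Aᵀ‖ = ‖A‖ := by
  rw [← conjTranspose_eq_transpose_of_trivial, l2_opNorm_conjTranspose]

theorem l2_opNorm_transpose_mul_self (A : Matrix m n ℝ) : ‖Aᵀ * A‖ = ‖A‖ * ‖A‖ := by
  rw [← conjTranspose_eq_transpose_of_trivial, l2_opNorm_conjTranspose_mul_self]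

theorem l2_opNorm_one_le : ‖(1 : Matrix n n ℝ)‖ ≤ 1 := by
  rw [← diagonal_one, l2_opNorm_diagonal]
  exact pi_norm_le_iff_of_nonneg zero_le_one |>.mpr fun _ => by simp

theorem l2_opNorm_le_one_of_transpose_mul_self_eq_one {F : Matrix m n ℝ} (hF : Fᵀ * F = 1) :
    ‖F‖ ≤ 1 := by
  have hsq : ‖F‖ * ‖F‖ ≤ 1 := by rw [← l2_opNorm_transpose_mul_self, hF]; exact l2_opNorm_one_le
  nlinarith [norm_nonneg F]

theorem l2_opNorm_mul_mul_transpose_le [DecidableEq m] (A : Matrix m n ℝ) (B : Matrix n n ℝ) :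
    ‖A * B * Aᵀ‖ ≤ ‖A‖ * ‖A‖ * ‖B‖ :=
  calc ‖A * B * Aᵀ‖ ≤ ‖A‖ * ‖B‖ * ‖Aᵀ‖ :=
        (l2_opNorm_mul _ _).trans <| by gcongr; exact l2_opNorm_mul _ _
    _ = ‖A‖ * ‖A‖ * ‖B‖ := by rw [l2_opNorm_transpose]; ring

theorem l2_opNorm_mul_mul_mul_transpose_mul_le [DecidableEq m] {Q K : Matrix m m ℝ}
    {F : Matrix m n ℝ} (hQt : Qᵀ = Q) (hQQ : Q * Q = K) (hF : Fᵀ * F = 1) (E : Matrix n n ℝ) :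
    ‖Q * F * E * Fᵀ * Q‖ ≤ ‖K‖ * ‖E‖ := by
  have hQF : ‖Q * F‖ ≤ ‖Q‖ := (l2_opNorm_mul Q F).trans <|
    mul_le_of_le_one_right (norm_nonneg Q) (l2_opNorm_le_one_of_transpose_mul_self_eq_one hF)
  calc ‖Q * F * E * Fᵀ * Q‖ = ‖(Q * F) * E * (Q * F)ᵀ‖ := by
        rw [transpose_mul, hQt]; simp only [Matrix.mul_assoc]
    _ ≤ ‖Q * F‖ * ‖Q * F‖ * ‖E‖ := l2_opNorm_mul_mul_transpose_le _ _
    _ ≤ ‖Q‖ * ‖Q‖ * ‖E‖ := by gcongr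
    _ = ‖K‖ * ‖E‖ := by rw [← l2_opNorm_transpose_mul_self, hQt, hQQ]

end L2OpNorm

end Matrix

open scoped Matrix.Norms.L2Operator

theorem specNorm_eq_l2_opNorm {α β : Type*} [Fintype α] [Fintype β] [DecidableEq α]
    [DecidableEq β] (A : Matrix α β ℝ) : specNorm A = ‖A‖ :=
  rfl

theorem stmt_16_general {n m : ℕ} (K : Matrix (Fin n) (Fin n) ℝ) (hK : K.PosDef)
    (P : Matrix (Fin n) (Fin m) ℝ)
    (C : Matrix (Fin n) (Fin m) ℝ) (We : Matrix (Fin m) (Fin m) ℝ)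
    (hC : C = K * P) (hWe_def : We = Pᵀ * K * P)
    -- singular value decomposition K^{1/2} P = F S Nᵀ
    (F : Matrix (Fin n) (Fin m) ℝ) (N : Matrix (Fin m) (Fin m) ℝ) (s : Fin m → ℝ)
    (hF : Fᵀ * F = 1) (hN : Nᵀ * N = 1) (hs : ∀ i, 0 < s i)
    (hSVD : hK.posSemidef.sqrt * P = F * Matrix.diagonal s * Nᵀ)
    -- W is any positive definite matrix with spectral decomposition W = Ñ S̃² Ñᵀ
    (W : Matrix (Fin m) (Fin m) ℝ)
    (Nt : Matrix (Fin m) (Fin m) ℝ) (t : Fin m → ℝ)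
    (hNt : Ntᵀ * Nt = 1) (ht : ∀ i, 0 < t i)
    (hW_spec : W = Nt * Matrix.diagonal (fun i => t i ^ 2) * Ntᵀ)
    (Et : Matrix (Fin m) (Fin m) ℝ)
    (hEt : Et = Matrix.diagonal s * Nᵀ * Nt * Matrix.diagonal (fun i => (t i ^ 2)⁻¹) *
        Ntᵀ * N * Matrix.diagonal s - 1) :
    C * W⁻¹ * Cᵀ - C * We⁻¹ * Cᵀ = hK.posSemidef.sqrt * F * Et * Fᵀ * hK.posSemidef.sqrt ∧
    specNorm (C * W⁻¹ * Cᵀ - C * We⁻¹ * Cᵀ) ≤ specNorm K * specNorm Et := by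
  set Q := hK.posSemidef.sqrt
  set L := F * diagonal s * Nᵀ
  have hQt : Qᵀ = Q := by
    rw [← conjTranspose_eq_transpose_of_trivial]; exact hK.posSemidef.isHermitian_sqrt
  have hQQ : Q * Q = K := hK.posSemidef.sqrt_mul_self
  have hCQ : C = Q * L := by rw [hC, ← hQQ, Matrix.mul_assoc, hSVD]
  have hWeL : We = Lᵀ * L := by
    rw [hWe_def, ← hSVD, ← hQQ, transpose_mul, hQt]; simp only [Matrix.mul_assoc]
  have hWinv : W⁻¹ = Nt * diagonal (fun i => (t i ^ 2)⁻¹) * Ntᵀ := by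
    rw [hW_spec, inv_mul_mul_transpose_of_orthogonal hNt,
      inv_diagonal_of_ne_zero fun i => pow_ne_zero 2 (ht i).ne']
    rfl
  have hS : IsUnit (diagonal s).det := by
    rw [det_diagonal]; exact (Finset.prod_pos fun i _ => hs i).ne'.isUnit
  have key : C * W⁻¹ * Cᵀ - C * We⁻¹ * Cᵀ = Q * F * Et * Fᵀ * Q :=
    calc C * W⁻¹ * Cᵀ - C * We⁻¹ * Cᵀ = Q * (L * W⁻¹ * Lᵀ - L * (Lᵀ * L)⁻¹ * Lᵀ) * Q := by
          rw [hCQ, hWeL, transpose_mul, hQt]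
          simp only [Matrix.mul_sub, Matrix.sub_mul, Matrix.mul_assoc]
      _ = Q * F * Et * Fᵀ * Q := by
          rw [mul_inv_transpose_mul_self_mul_transpose_of_orthogonal hF hN hS, hEt, hWinv]
          simp only [L, transpose_mul, transpose_transpose, diagonal_transpose, Matrix.mul_sub,
            Matrix.sub_mul, Matrix.mul_one, Matrix.mul_assoc]
  refine ⟨key, ?_⟩
  simpa only [key, specNorm_eq_l2_opNorm] using
    l2_opNorm_mul_mul_mul_transpose_mul_le hQt hQQ hF Et

/-- Final step of Theorem 3: the difference of the two Nyström approximations equals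
K^{1/2} F Ẽ Fᵀ K^{1/2}, whence its spectral norm is at most ‖K‖₂·‖Ẽ‖₂. -/
theorem stmt_16 {n m : ℕ} (K : Matrix (Fin n) (Fin n) ℝ) (hK : K.PosDef)
    (P : Matrix (Fin n) (Fin m) ℝ)
    (C : Matrix (Fin n) (Fin m) ℝ) (We : Matrix (Fin m) (Fin m) ℝ)
    (hC : C = K * P) (hWe_def : We = Pᵀ * K * P) (hWe : We.PosDef)
    -- singular value decomposition K^{1/2} P = F S Nᵀ
    (F : Matrix (Fin n) (Fin m) ℝ) (N : Matrix (Fin m) (Fin m) ℝ) (s : Fin m → ℝ)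
    (hF : Fᵀ * F = 1) (hN : Nᵀ * N = 1) (hs : ∀ i, 0 < s i)
    (hSVD : hK.posSemidef.sqrt * P = F * Matrix.diagonal s * Nᵀ)
    -- W is any positive definite matrix with spectral decomposition W = Ñ S̃² Ñᵀ
    (W : Matrix (Fin m) (Fin m) ℝ) (hW : W.PosDef)
    (Nt : Matrix (Fin m) (Fin m) ℝ) (t : Fin m → ℝ)
    (hNt : Ntᵀ * Nt = 1) (ht : ∀ i, 0 < t i)
    (hW_spec : W = Nt * Matrix.diagonal (fun i => t i ^ 2) * Ntᵀ)
    (Et : Matrix (Fin m) (Fin m) ℝ)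
    (hEt : Et = Matrix.diagonal s * Nᵀ * Nt * Matrix.diagonal (fun i => (t i ^ 2)⁻¹) *
        Ntᵀ * N * Matrix.diagonal s - 1) :
    C * W⁻¹ * Cᵀ - C * We⁻¹ * Cᵀ = hK.posSemidef.sqrt * F * Et * Fᵀ * hK.posSemidef.sqrt ∧
    specNorm (C * W⁻¹ * Cᵀ - C * We⁻¹ * Cᵀ) ≤ specNorm K * specNorm Et :=
  stmt_16_general K hK P C We hC hWe_def F N s hF hN hs hSVD W Nt t hNt ht hW_spec Et hEt
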